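/- arXiv:0707.3860 — 2 statements merged into one kernel-verified Lean document; each statement's English description precedes it below -/
import Mathlib

section
/- Let $\Pi$ be an irreducible positive recurrent kernel on a countable set $E$ with invariant probability $\pi$, and $\Pi_2$ the associated pair kernel. If two states $a,b$ are not accordable, then there exists a probability measure on $E^2$, invariant for $\Pi_2$, which gives zero mass to the diagonal $D$. -/
/-!
Run the pair chain from `(a, b)`. Non-accordability says exactly that its law at every time
`n ≥ 1` puts no mass on the diagonal. Its marginals are the one-point chains from `a` and `b`,
and since `π` is invariant the law of the chain from `x` is dominated by `π / π{x}`, where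
`π{x} > 0` by irreducibility; so the laws of the pair chain are tight. On a countable space the
Cesàro means of a tight sequence converge pointwise along an ultrafilter to a probability
measure; it is invariant because the Cesàro means are invariant up to `O(1/N)`, and it charges
no set that all the laws ignore, in particular not the diagonal.
-/

open MeasureTheory
open scoped ENNReal

/-- The law at time `n` of the chain `X_{n+1} = f(X_n, V_{n+1})` started at `x`
(iterates of the kernel `Π(x,·) = law (f x V₁)` applied to `δ_x`). -/
noncomputable def chainIter {E G : Type*} [MeasurableSpace E] [MeasurableSpace G]
    (f : E → G → E) (β : Measure G) (x : E) : ℕ → Measure E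
  | 0 => Measure.dirac x
  | n + 1 => (chainIter f β x n).bind fun y => Measure.map (fun v => f y v) β

/-- Two states are accordable if some random composition `f_{V_l} ∘ ⋯ ∘ f_{V_1}`
merges them with positive probability (the `V_i` being i.i.d. of law `β`). -/
def AccordableStates {E G : Type*} [MeasurableSpace G]
    (f : E → G → E) (β : Measure G) (x y : E) : Prop :=
  ∃ l : ℕ, 0 < l ∧
    0 < Measure.pi (fun _ : Fin l => β)
      {v : Fin l → G |
        (List.ofFn v).foldl f x = (List.ofFn v).foldl f y}

open Filter Topology

lemma List.foldl_ofFn_succ' {α β : Type*} (f : α → β → α) (x : α) {n : ℕ} (v : Fin (n + 1) → β) :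
    (List.ofFn v).foldl f x = f ((List.ofFn (Fin.init v)).foldl f x) (v (Fin.last n)) := by
  rw [List.ofFn_succ', List.concat_eq_append, List.foldl_concat]
  rfl

section RandomComposition

variable {E G : Type*} [MeasurableSpace E] [MeasurableSingletonClass E] [Countable E]
  [MeasurableSpace G] {f : E → G → E}

lemma measurable_apply_of_countable {Ω : Type*} [MeasurableSpace Ω] (hf : ∀ x, Measurable (f x))
    {φ : Ω → E} {g : Ω → G} (hφ : Measurable φ) (hg : Measurable g) :
    Measurable fun ω => f (φ ω) (g ω) :=
  (measurable_from_prod_countable_right (f := Function.uncurry f) hf).comp (hφ.prodMk hg)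

lemma measurable_foldl_ofFn (hf : ∀ x, Measurable (f x)) (x : E) :
    ∀ n, Measurable fun v : Fin n → G => (List.ofFn v).foldl f x
  | 0 => by simp
  | n + 1 => by
    simp_rw [List.foldl_ofFn_succ']
    exact measurable_apply_of_countable hf
      ((measurable_foldl_ofFn hf x n).comp (measurable_pi_lambda _ fun i => measurable_pi_apply _))
      (measurable_pi_apply _)

lemma bind_map_eq_map_prod {Ω : Type*} [MeasurableSpace Ω] (hf : ∀ x, Measurable (f x))
    (β : Measure G) [SFinite β] (μ : Measure Ω) [SFinite μ] {φ : Ω → E} (hφ : Measurable φ) :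
    (μ.map φ).bind (fun y => β.map (f y)) = (β.prod μ).map fun c => f (φ c.2) c.1 := by
  have hψ : Measurable fun c : G × Ω => f (φ c.2) c.1 :=
    measurable_apply_of_countable hf (hφ.comp measurable_snd) measurable_fst
  ext s hs
  rw [Measure.bind_apply hs Measurable.of_discrete.aemeasurable, lintegral_map
      Measurable.of_discrete hφ, Measure.map_apply hψ hs, Measure.prod_apply_symm (hψ hs)]
  refine lintegral_congr fun w => ?_
  rw [Measure.map_apply (hf _) hs]
  rfl

theorem chainIter_eq_map_foldl (hf : ∀ x, Measurable (f x)) (β : Measure G)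
    [IsProbabilityMeasure β] (x : E) :
    ∀ n, chainIter f β x n = (Measure.pi fun _ : Fin n => β).map fun v => (List.ofFn v).foldl f x
  | 0 => by
    rw [Measure.pi_of_empty, Measure.map_dirac' (measurable_foldl_ofFn hf x 0)]
    rfl
  | n + 1 => by
    have hsplit := measurePreserving_piFinSuccAbove (fun _ : Fin (n + 1) => β) (Fin.last n)
    have hfold : (fun v : Fin (n + 1) → G => (List.ofFn v).foldl f x) =
        (fun c => f ((List.ofFn c.2).foldl f x) c.1) ∘
          MeasurableEquiv.piFinSuccAbove _ (Fin.last n) :=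
      funext fun v => by
        rw [List.foldl_ofFn_succ']
        simp
    rw [chainIter, chainIter_eq_map_foldl hf β x n, bind_map_eq_map_prod hf β _
      (measurable_foldl_ofFn hf x n), hfold, ← Measure.map_map _ hsplit.measurable, hsplit.map_eq]
    exact measurable_apply_of_countable hf ((measurable_foldl_ofFn hf x n).comp measurable_snd)
      measurable_fst

lemma isProbabilityMeasure_chainIter (hf : ∀ x, Measurable (f x)) (β : Measure G)
    [IsProbabilityMeasure β] (x : E) (n : ℕ) : IsProbabilityMeasure (chainIter f β x n) := by
  rw [chainIter_eq_map_foldl hf]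
  exact Measure.isProbabilityMeasure_map (measurable_foldl_ofFn hf x n).aemeasurable

end RandomComposition

def pairMap {E G : Type*} (f : E → G → E) (p : E × E) (v : G) : E × E := (f p.1 v, f p.2 v)

lemma foldl_pairMap {E G : Type*} (f : E → G → E) (l : List G) (x y : E) :
    l.foldl (pairMap f) (x, y) = (l.foldl f x, l.foldl f y) := by
  induction l generalizing x y with
  | nil => rfl
  | cons v l ih => exact ih _ _

lemma measurable_pairMap {E G : Type*} [MeasurableSpace E] [MeasurableSpace G] {f : E → G → E}
    (hf : ∀ x, Measurable (f x)) (p : E × E) : Measurable (pairMap f p) :=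
  (hf p.1).prodMk (hf p.2)

section PairChain

variable {E G : Type*} [MeasurableSpace E] [MeasurableSingletonClass E] [Countable E]
  [MeasurableSpace G] {f : E → G → E} {β : Measure G} [IsProbabilityMeasure β]

lemma chainIter_pairMap (hf : ∀ x, Measurable (f x)) (x y : E) (n : ℕ) :
    chainIter (pairMap f) β (x, y) n = (Measure.pi fun _ : Fin n => β).map
      fun v => ((List.ofFn v).foldl f x, (List.ofFn v).foldl f y) := by
  rw [chainIter_eq_map_foldl (measurable_pairMap hf)]
  simp_rw [foldl_pairMap]

lemma map_fst_chainIter_pairMap (hf : ∀ x, Measurable (f x)) (x y : E) (n : ℕ) :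
    (chainIter (pairMap f) β (x, y) n).map Prod.fst = chainIter f β x n := by
  rw [chainIter_pairMap hf, Measure.map_map measurable_fst
    ((measurable_foldl_ofFn hf x n).prodMk (measurable_foldl_ofFn hf y n)),
    chainIter_eq_map_foldl hf]
  rfl

lemma map_snd_chainIter_pairMap (hf : ∀ x, Measurable (f x)) (x y : E) (n : ℕ) :
    (chainIter (pairMap f) β (x, y) n).map Prod.snd = chainIter f β y n := by
  rw [chainIter_pairMap hf, Measure.map_map measurable_snd
    ((measurable_foldl_ofFn hf x n).prodMk (measurable_foldl_ofFn hf y n)),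
    chainIter_eq_map_foldl hf]
  rfl

lemma chainIter_pairMap_diagonal (hf : ∀ x, Measurable (f x)) (x y : E) (n : ℕ) :
    chainIter (pairMap f) β (x, y) n {p | p.1 = p.2} = Measure.pi (fun _ : Fin n => β)
      {v | (List.ofFn v).foldl f x = (List.ofFn v).foldl f y} := by
  rw [chainIter_pairMap hf, Measure.map_apply
    ((measurable_foldl_ofFn hf x n).prodMk (measurable_foldl_ofFn hf y n)) .of_discrete]
  rfl

lemma chainIter_pairMap_diagonal_eq_zero (hf : ∀ x, Measurable (f x)) {x y : E}
    (hxy : ¬ AccordableStates f β x y) (n : ℕ) :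
    chainIter (pairMap f) β (x, y) (n + 1) {p | p.1 = p.2} = 0 := by
  simp only [AccordableStates, not_exists, not_and, not_lt, nonpos_iff_eq_zero] at hxy
  rw [chainIter_pairMap_diagonal hf]
  exact hxy (n + 1) n.succ_pos

end PairChain

lemma MeasureTheory.Measure.bind_mono_left {X Y : Type*} [MeasurableSpace X] [MeasurableSpace Y]
    {μ ν : Measure X} {k : X → Measure Y} (hk : Measurable k) (h : μ ≤ ν) :
    μ.bind k ≤ ν.bind k :=
  Measure.le_iff.2 fun s hs => by
    rw [Measure.bind_apply hs hk.aemeasurable, Measure.bind_apply hs hk.aemeasurable]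
    exact lintegral_mono' h le_rfl

section Domination

variable {E G : Type*} [MeasurableSpace E] [MeasurableSingletonClass E] [Countable E]
  [MeasurableSpace G] {f : E → G → E} {β : Measure G} {π : Measure E}

lemma smul_chainIter_le (hπ : π.bind (fun x => Measure.map (fun v => f x v) β) = π) (x : E) :
    ∀ n, π {x} • chainIter f β x n ≤ π
  | 0 => by
    rw [chainIter, ← Measure.restrict_singleton]
    exact Measure.restrict_le_self
  | n + 1 => by
    rw [chainIter, ← Measure.bind_smul]
    conv_rhs => rw [← hπ]
    exact Measure.bind_mono_left .of_discrete (smul_chainIter_le hπ x n)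

lemma measure_singleton_ne_zero_of_irreducible [NeZero π]
    (hπ : π.bind (fun x => Measure.map (fun v => f x v) β) = π)
    (hirr : ∀ x y : E, ∃ n : ℕ, 0 < chainIter f β x n {y}) (y : E) : π {y} ≠ 0 := by
  obtain ⟨x, hx⟩ : ∃ x, π {x} ≠ 0 := by
    by_contra! h
    exact NeZero.ne π (Measure.ext_iff_singleton.2 h)
  obtain ⟨n, hn⟩ := hirr x y
  have h := Measure.le_iff'.1 (smul_chainIter_le hπ x n) {y}
  rw [Measure.smul_apply, smul_eq_mul] at h
  exact ((ENNReal.mul_pos hx hn.ne').trans_le h).ne'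

end Domination

-- Tightness for the discrete topology, whose compact sets are the finite ones.
def IsFinitelyTight {X ι : Type*} [MeasurableSpace X] (ν : ι → Measure X) : Prop :=
  ∀ ε : ℝ≥0∞, 0 < ε → ∃ F : Finset X, ∀ i, ν i (↑F)ᶜ ≤ ε

section Tightness

variable {X ι : Type*} [MeasurableSpace X] [MeasurableSingletonClass X]

lemma IsFinitelyTight.of_map_fst_snd {Y : Type*} [MeasurableSpace Y] [MeasurableSingletonClass Y]
    {ν : ι → Measure (X × Y)} (h₁ : IsFinitelyTight fun i => (ν i).map Prod.fst)
    (h₂ : IsFinitelyTight fun i => (ν i).map Prod.snd) : IsFinitelyTight ν := by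
  intro ε hε
  obtain ⟨F₁, hF₁⟩ := h₁ (ε / 2) (ENNReal.half_pos hε.ne')
  obtain ⟨F₂, hF₂⟩ := h₂ (ε / 2) (ENNReal.half_pos hε.ne')
  refine ⟨F₁ ×ˢ F₂, fun i => ?_⟩
  have hsub : (↑(F₁ ×ˢ F₂) : Set (X × Y))ᶜ ⊆ Prod.fst ⁻¹' (↑F₁)ᶜ ∪ Prod.snd ⁻¹' (↑F₂)ᶜ := by
    intro p hp
    simp only [Finset.coe_product, Set.mem_compl_iff, Set.mem_prod, not_and_or] at hp
    exact hp
  calc ν i (↑(F₁ ×ˢ F₂))ᶜ ≤ ν i (Prod.fst ⁻¹' (↑F₁)ᶜ) + ν i (Prod.snd ⁻¹' (↑F₂)ᶜ) :=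
        (measure_mono hsub).trans (measure_union_le _ _)
    _ ≤ ε / 2 + ε / 2 := by
        gcongr
        · simpa [Measure.map_apply measurable_fst F₁.measurableSet.compl] using hF₁ i
        · simpa [Measure.map_apply measurable_snd F₂.measurableSet.compl] using hF₂ i
    _ = ε := ENNReal.add_halves ε

variable [Countable X]

lemma tsum_measure_singleton (μ : Measure X) : ∑' x, μ {x} = μ Set.univ := by
  simpa using μ.tsum_indicator_apply_singleton Set.univ .univ

lemma exists_finset_measure_compl_le (μ : Measure X) [IsFiniteMeasure μ] {ε : ℝ≥0∞}
    (hε : 0 < ε) : ∃ F : Finset X, μ (↑F)ᶜ ≤ ε := by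
  have hsum : ∑' x, μ {x} ≠ ∞ := by
    rw [tsum_measure_singleton]
    exact measure_ne_top μ _
  obtain ⟨F, hF⟩ := ((ENNReal.tendsto_tsum_compl_atTop_zero hsum).eventually
    (eventually_le_nhds hε)).exists
  refine ⟨F, le_of_eq_of_le ?_ hF⟩
  exact (tsum_measure_preimage_singleton (Set.to_countable (↑F : Set X)ᶜ)
    fun _ _ => .of_discrete).symm

lemma IsFinitelyTight.of_smul_le {ν : ι → Measure X} {π : Measure X} [IsFiniteMeasure π]
    {c : ℝ≥0∞} (hc : c ≠ 0) (hc' : c ≠ ∞) (h : ∀ i, c • ν i ≤ π) : IsFinitelyTight ν := by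
  intro ε hε
  obtain ⟨F, hF⟩ := exists_finset_measure_compl_le π (ENNReal.mul_pos hc hε.ne')
  refine ⟨F, fun i => (ENNReal.mul_le_mul_iff_right hc hc').1 ?_⟩
  calc c * ν i (↑F)ᶜ = (c • ν i) (↑F)ᶜ := rfl
    _ ≤ π (↑F)ᶜ := Measure.le_iff'.1 (h i) _
    _ ≤ c * ε := hF

end Tightness

lemma tsum_le_of_tendsto {α ι : Type*} {l : Filter ι} [l.NeBot] {u : ι → α → ℝ≥0∞}
    {g : α → ℝ≥0∞} {w : ι → ℝ≥0∞} {L : ℝ≥0∞} (hu : ∀ a, Tendsto (fun i => u i a) l (𝓝 (g a)))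
    (hw : Tendsto w l (𝓝 L)) (h : ∀ i, ∑' a, u i a ≤ w i) : ∑' a, g a ≤ L := by
  rw [ENNReal.tsum_eq_iSup_sum]
  exact iSup_le fun s => le_of_tendsto_of_tendsto (tendsto_finsetSum s fun a _ => hu a) hw
    (.of_forall fun i => (ENNReal.sum_le_tsum s).trans (h i))

lemma inv_mul_sum_range_const (N : ℕ) (c : ℝ≥0∞) :
    ((N : ℝ≥0∞) + 1)⁻¹ * ∑ _n ∈ Finset.range (N + 1), c = c := by
  rw [Finset.sum_const, Finset.card_range, nsmul_eq_mul, ← mul_assoc, Nat.cast_succ,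
    ENNReal.inv_mul_cancel (by simp) (by simp), one_mul]

section Cesaro

variable {X : Type*} [MeasurableSpace X]

noncomputable def cesaro (ν : ℕ → Measure X) (N : ℕ) : Measure X :=
  ((N : ℝ≥0∞) + 1)⁻¹ • ∑ n ∈ Finset.range (N + 1), ν n

lemma cesaro_apply (ν : ℕ → Measure X) (N : ℕ) (s : Set X) :
    cesaro ν N s = ((N : ℝ≥0∞) + 1)⁻¹ * ∑ n ∈ Finset.range (N + 1), ν n s := by
  simp [cesaro, Measure.finsetSum_apply]

lemma cesaro_apply_le {ν : ℕ → Measure X} {s : Set X} {c : ℝ≥0∞} (h : ∀ n, ν n s ≤ c) (N : ℕ) :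
    cesaro ν N s ≤ c := by
  rw [cesaro_apply, ← inv_mul_sum_range_const N c]
  gcongr
  exact h _

instance (ν : ℕ → Measure X) [∀ n, IsProbabilityMeasure (ν n)] (N : ℕ) :
    IsProbabilityMeasure (cesaro ν N) :=
  ⟨by simp only [cesaro_apply, measure_univ, inv_mul_sum_range_const]⟩

lemma IsFinitelyTight.cesaro {ν : ℕ → Measure X} (h : IsFinitelyTight ν) :
    IsFinitelyTight (cesaro ν) :=
  fun ε hε => (h ε hε).imp fun _ hF => cesaro_apply_le hF

lemma cesaro_bind_apply_le [MeasurableSingletonClass X] [Countable X] {k : X → Measure X}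
    {ν : ℕ → Measure X} [∀ n, IsProbabilityMeasure (ν n)] (hν : ∀ n, (ν n).bind k = ν (n + 1))
    (N : ℕ) (s : Set X) : (cesaro ν N).bind k s ≤ cesaro ν N s + ((N : ℝ≥0∞) + 1)⁻¹ := by
  have hshift : (cesaro ν N).bind k s =
      ((N : ℝ≥0∞) + 1)⁻¹ * ∑ n ∈ Finset.range (N + 1), ν (n + 1) s := by
    simp_rw [Measure.bind_apply .of_discrete Measurable.of_discrete.aemeasurable, cesaro,
      lintegral_smul_measure, lintegral_finsetSum_measure, ← hν,
      Measure.bind_apply .of_discrete Measurable.of_discrete.aemeasurable, smul_eq_mul]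
  have hsum : ∑ n ∈ Finset.range (N + 1), ν (n + 1) s ≤ ∑ n ∈ Finset.range (N + 1), ν n s + 1 :=
    calc ∑ n ∈ Finset.range (N + 1), ν (n + 1) s
        ≤ ∑ n ∈ Finset.range (N + 1), ν (n + 1) s + ν 0 s := le_self_add
      _ = ∑ n ∈ Finset.range (N + 1), ν n s + ν (N + 1) s := by
        rw [← Finset.sum_range_succ' (fun n => ν n s), Finset.sum_range_succ]
      _ ≤ ∑ n ∈ Finset.range (N + 1), ν n s + 1 := add_le_add_right prob_le_one _
  calc (cesaro ν N).bind k s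
      ≤ ((N : ℝ≥0∞) + 1)⁻¹ * ((∑ n ∈ Finset.range (N + 1), ν n s) + 1) := by
        rw [hshift]
        gcongr
    _ = cesaro ν N s + ((N : ℝ≥0∞) + 1)⁻¹ := by rw [cesaro_apply, mul_add, mul_one]

end Cesaro

section KrylovBogolyubov

variable {X : Type*} [MeasurableSpace X] [MeasurableSingletonClass X] [Countable X]

lemma IsFinitelyTight.exists_tendsto_measure_singleton {ι : Type*} {μ : ι → Measure X}
    [∀ i, IsProbabilityMeasure (μ i)] (h : IsFinitelyTight μ) (U : Ultrafilter ι) :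
    ∃ ρ : Measure X, IsProbabilityMeasure ρ ∧ ∀ x, Tendsto (fun i => μ i {x}) U (𝓝 (ρ {x})) := by
  set g : X → ℝ≥0∞ := fun x => (U.map fun i => μ i {x}).lim
  have hg : ∀ x, Tendsto (fun i => μ i {x}) U (𝓝 (g x)) := fun x => Ultrafilter.le_nhds_lim _
  have hle : ∑' x, g x ≤ 1 :=
    tsum_le_of_tendsto hg tendsto_const_nhds fun i => by rw [tsum_measure_singleton, measure_univ]
  have hge : 1 ≤ ∑' x, g x := by
    refine ENNReal.le_of_forall_pos_le_add fun ε hε _ => ?_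
    obtain ⟨F, hF⟩ := h ε (by exact_mod_cast hε)
    have hlim : Tendsto (fun i => μ i ↑F) U (𝓝 (∑ x ∈ F, g x)) := by
      simp_rw [← sum_measure_singleton]
      exact tendsto_finsetSum F fun x _ => hg x
    calc 1 ≤ ∑ x ∈ F, g x + ε := ge_of_tendsto (hlim.add_const _) (.of_forall fun i => by
          rw [← prob_add_prob_compl (μ := μ i) F.measurableSet]
          gcongr
          exact hF i)
      _ ≤ ∑' x, g x + ε := by gcongr; exact ENNReal.sum_le_tsum F
  let p : PMF X := ⟨g, hle.antisymm hge ▸ ENNReal.summable.hasSum⟩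
  exact ⟨p.toMeasure, inferInstance, fun x => by
    rw [p.toMeasure_apply_singleton x .of_discrete]
    exact hg x⟩

lemma eq_of_forall_measure_singleton_le {μ ν : Measure X} [IsProbabilityMeasure μ]
    [IsProbabilityMeasure ν] (h : ∀ x, μ {x} ≤ ν {x}) : μ = ν := by
  refine Measure.ext_iff_singleton.2 fun x => (h x).antisymm ?_
  by_contra! hlt
  have := ENNReal.tsum_lt_tsum (by rw [tsum_measure_singleton]; exact measure_ne_top _ _) h hlt
  simp [tsum_measure_singleton] at this

theorem exists_isProbabilityMeasure_bind_eq_self {k : X → Measure X}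
    [∀ x, IsProbabilityMeasure (k x)] {ν : ℕ → Measure X} [∀ n, IsProbabilityMeasure (ν n)]
    (hν : ∀ n, (ν n).bind k = ν (n + 1)) (htight : IsFinitelyTight ν) :
    ∃ ρ : Measure X, IsProbabilityMeasure ρ ∧ ρ.bind k = ρ ∧ ρ ≪ Measure.sum ν := by
  obtain ⟨ρ, hρ, hlim⟩ := htight.cesaro.exists_tendsto_measure_singleton (hyperfilter ℕ)
  have hinv : ∀ q, ρ.bind k {q} ≤ ρ {q} := by
    intro q
    have hinv_succ : Tendsto (fun N : ℕ => ((N : ℝ≥0∞) + 1)⁻¹) (hyperfilter ℕ) (𝓝 0) := by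
      have h := ENNReal.tendsto_inv_nat_nhds_zero.comp (tendsto_add_atTop_nat 1)
      simp only [Function.comp_def, Nat.cast_add, Nat.cast_one] at h
      exact h.mono_left Nat.hyperfilter_le_atTop
    rw [Measure.bind_apply .of_discrete Measurable.of_discrete.aemeasurable, lintegral_countable']
    refine tsum_le_of_tendsto (fun p => ENNReal.Tendsto.const_mul (hlim p)
      (.inr (measure_ne_top _ _))) (add_zero (ρ {q}) ▸ (hlim q).add hinv_succ) fun N => ?_
    rw [← lintegral_countable', ← Measure.bind_apply .of_discrete
      Measurable.of_discrete.aemeasurable]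
    exact cesaro_bind_apply_le hν N {q}
  have : IsProbabilityMeasure (ρ.bind k) :=
    ⟨by simp [Measure.bind_apply .univ Measurable.of_discrete.aemeasurable]⟩
  refine ⟨ρ, hρ, eq_of_forall_measure_singleton_le hinv, fun s hs => ?_⟩
  rw [Measure.sum_apply_eq_zero' .of_discrete] at hs
  have hzero : ∀ x ∈ s, ρ {x} = 0 := by
    intro x hx
    have hcesaro : ∀ N, cesaro ν N {x} = 0 := fun N => nonpos_iff_eq_zero.1 <|
      (measure_mono (Set.singleton_subset_iff.2 hx)).trans (cesaro_apply_le (fun n => (hs n).le) N)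
    exact tendsto_nhds_unique (hlim x) (by simp [hcesaro])
  rw [← Set.biUnion_of_singleton s]
  exact (measure_biUnion_null_iff s.to_countable).2 hzero

end KrylovBogolyubov

/-- if the kernel `Π(x,·) = law (f x V₁)` is irreducible and positively
recurrent, with invariant probability `π`, and the two states `a, b` are not accordable,
then there exists a probability measure on `E²`, invariant for the pair kernel `Π₂`,
which gives zero mass to the diagonal. -/
theorem stmt_7 {E G : Type*} [MeasurableSpace E] [MeasurableSingletonClass E]
    [Countable E] [MeasurableSpace G]
    (f : E → G → E) (hf : ∀ x, Measurable (f x))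
    (β : Measure G) [IsProbabilityMeasure β]
    (π : Measure E) [IsProbabilityMeasure π]
    (hπ : π.bind (fun x => Measure.map (fun v => f x v) β) = π)
    (hirr : ∀ x y : E, ∃ n : ℕ, 0 < chainIter f β x n {y})
    (a b : E) (hab : ¬ AccordableStates f β a b) :
    ∃ ρ : Measure (E × E), IsProbabilityMeasure ρ ∧
      ρ.bind (fun p => Measure.map (fun v => (f p.1 v, f p.2 v)) β) = ρ ∧
      ρ {p : E × E | p.1 = p.2} = 0 := by
  have : ∀ p, IsProbabilityMeasure (Measure.map (fun v => pairMap f p v) β) :=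
    fun p => Measure.isProbabilityMeasure_map (measurable_pairMap hf p).aemeasurable
  have : ∀ n, IsProbabilityMeasure (chainIter (pairMap f) β (a, b) (n + 1)) :=
    fun n => isProbabilityMeasure_chainIter (measurable_pairMap hf) β (a, b) (n + 1)
  have hπpos := measure_singleton_ne_zero_of_irreducible hπ hirr
  -- Time `0` is dropped: accordability only concerns compositions of positive length.
  have htight : IsFinitelyTight fun n => chainIter (pairMap f) β (a, b) (n + 1) :=
    .of_map_fst_snd
      (.of_smul_le (hπpos a) (measure_ne_top π _) fun n => by
        rw [map_fst_chainIter_pairMap hf]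
        exact smul_chainIter_le hπ a _)
      (.of_smul_le (hπpos b) (measure_ne_top π _) fun n => by
        rw [map_snd_chainIter_pairMap hf]
        exact smul_chainIter_le hπ b _)
  obtain ⟨ρ, hρ, hinv, hac⟩ := exists_isProbabilityMeasure_bind_eq_self (fun _ => rfl) htight
  refine ⟨ρ, hρ, hinv, hac ?_⟩
  rw [Measure.sum_apply_eq_zero' .of_discrete]
  exact chainIter_pairMap_diagonal_eq_zero hf hab
end

section
/- Let $G$ be a compact group acting continuously on a Polish space $E$, and let $(X_n)_{n\in\mathbf{Z}}$ be a random walk $X_{n+1}=V_{n+1}\cdot X_n$ with i.i.d. $G$-valued innovations $V_n$ of law $\mu$ whose support is not contained in any coset of a proper closed normal subgroup, each $V_{n+1}$ independent of $((X_k,V_k))_{k\le n}$. Then the conditional law of $X_0$ given the asymptotic sigma-field $\mathcal{F}_{-\infty}$ is the uniform law on the orbit $G\cdot X_0$, i.e., the image of the Haar measure on $G$ under $g\mapsto g\cdot X_0$. -/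
/-!
Write `Pⁿφ(x) = 𝔼 φ(V₁ ⋯ Vₙ • x)` (`walkAverage`). Because `V_{m+1}` is independent of the past
up to time `m`, on every tail event the integral of `φ(X₀)` equals that of `Pⁿφ(X₋ₙ)`, for
every `n`. The point `X₋ₙ` lies on the orbit of `X₀`, and `Pⁿφ(g • x)` converges to the orbit
average of `φ` at `x` uniformly in `g`: pointwise this is the convergence of the laws of
`V₁ ⋯ Vₙ` to Haar measure, and compactness of `G` makes the family equicontinuous in `g`.
Dominated convergence therefore identifies the integrals of `φ(X₀)` and of the orbit average
at `X₀` over tail events; the orbit average at `X₀` is itself tail measurable since it is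
constant along the walk.
-/

open MeasureTheory ProbabilityTheory Filter
open scoped ENNReal Topology BoundedContinuousFunction

lemma continuous_list_ofFn_prod {M : Type*} [Monoid M] [TopologicalSpace M] [ContinuousMul M] :
    ∀ {n : ℕ}, Continuous fun v : Fin n → M => (List.ofFn v).prod
  | 0 => by simpa using continuous_const
  | n + 1 => by
    simp only [List.ofFn_succ, List.prod_cons]
    exact (continuous_apply 0).mul
      (continuous_list_ofFn_prod.comp (continuous_pi fun i => continuous_apply i.succ))

namespace BoundedContinuousFunction

variable {α X : Type*} [MeasurableSpace α] [TopologicalSpace X] {ν : Measure α}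

lemma norm_integral_comp_le [IsProbabilityMeasure ν] (φ : X →ᵇ ℝ) (f : α → X) :
    ‖∫ a, φ (f a) ∂ν‖ ≤ ‖φ‖ := by
  simpa using norm_integral_le_of_norm_le_const (μ := ν)
    (Eventually.of_forall fun a => φ.norm_coe_le_norm (f a))

lemma integrable_comp [IsFiniteMeasure ν] (φ : X →ᵇ ℝ) {f : α → X}
    (hf : AEStronglyMeasurable (fun a => φ (f a)) ν) : Integrable (fun a => φ (f a)) ν :=
  .of_bound hf ‖φ‖ (Eventually.of_forall fun a => φ.norm_coe_le_norm (f a))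

lemma continuous_integral_comp_smul {G E : Type*} [TopologicalSpace α] [OpensMeasurableSpace α]
    [Group G] [TopologicalSpace G] [TopologicalSpace E] [FirstCountableTopology E] [MulAction G E]
    [ContinuousSMul G E]
    [IsFiniteMeasure ν] (φ : E →ᵇ ℝ) {f : α → G} (hf : Continuous f) :
    Continuous fun x => ∫ a, φ (f a • x) ∂ν :=
  continuous_of_dominated (bound := fun _ => ‖φ‖)
    (fun _ => (φ.continuous.comp (hf.smul continuous_const)).aestronglyMeasurable)
    (fun _ => Eventually.of_forall fun _ => φ.norm_coe_le_norm _) (integrable_const _)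
    (Eventually.of_forall fun _ => φ.continuous.comp (continuous_const_smul _))

end BoundedContinuousFunction

lemma dist_integral_le_of_forall_dist_le {α : Type*} [MeasurableSpace α] {ν : Measure α}
    [IsProbabilityMeasure ν] {f g : α → ℝ} (hf : Integrable f ν) (hg : Integrable g ν) {C : ℝ}
    (h : ∀ a, dist (f a) (g a) ≤ C) : dist (∫ a, f a ∂ν) (∫ a, g a ∂ν) ≤ C := by
  rw [dist_eq_norm, ← integral_sub hf hg]
  simpa using norm_integral_le_of_norm_le_const (μ := ν)
    (Eventually.of_forall fun a => (dist_eq_norm (f a) (g a)).symm.trans_le (h a))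

lemma Equicontinuous.tendstoUniformly_of_tendsto {ι X α : Type*} [TopologicalSpace X]
    [CompactSpace X] [UniformSpace α] {F : ι → X → α} {f : X → α} {l : Filter ι}
    (hF : Equicontinuous F) (h : Tendsto F l (𝓝 f)) : TendstoUniformly F f l :=
  UniformFun.tendsto_iff_tendstoUniformly.1 ((hF.tendsto_uniformFun_iff_pi l f).2 h)

lemma MeasureTheory.Measure.isMulRightInvariant_of_isProbabilityMeasure {G : Type*} [Group G]
    [TopologicalSpace G] [IsTopologicalGroup G] [LocallyCompactSpace G] [MeasurableSpace G]
    [BorelSpace G] (ν : Measure G) [ν.IsHaarMeasure] [IsProbabilityMeasure ν] :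
    ν.IsMulRightInvariant where
  map_mul_right_eq_self g := by
    have : IsProbabilityMeasure (ν.map (· * g)) :=
      isProbabilityMeasure_map (measurable_mul_const g).aemeasurable
    exact isHaarMeasure_eq_of_isProbabilityMeasure _ _

section Freezing

variable {Ω β γ : Type*} {m mΩ : MeasurableSpace Ω} [MeasurableSpace β] [MeasurableSpace γ]
  {P : Measure Ω} {Z : Ω → β} {W : Ω → γ} {s : Set Ω}

lemma ProbabilityTheory.Indep.map_prodMk_restrict_eq_prod [IsFiniteMeasure P] (hm : m ≤ mΩ)
    (hind : Indep (MeasurableSpace.comap W inferInstance) m P) (hZ : Measurable[m] Z)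
    (hW : Measurable W) (hs : MeasurableSet[m] s) :
    (P.restrict s).map (fun ω => (Z ω, W ω)) = ((P.restrict s).map Z).prod (P.map W) := by
  refine (Measure.prod_eq fun A B hA hB => ?_).symm
  have hZ' : Measurable Z := hZ.mono hm le_rfl
  rw [Measure.map_apply (hZ'.prodMk hW) (hA.prod hB), Measure.map_apply hZ' hA,
    Measure.map_apply hW hB, Measure.restrict_apply ((hZ'.prodMk hW) (hA.prod hB)),
    Measure.restrict_apply (hZ' hA), Set.mk_preimage_prod, Set.inter_right_comm, mul_comm,
    ← (Indep_iff _ _ _).1 hind _ _ ⟨B, hB, rfl⟩ ((hZ hA).inter hs), Set.inter_comm]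

lemma ProbabilityTheory.Indep.setIntegral_comp_prodMk [IsFiniteMeasure P] (hm : m ≤ mΩ)
    (hind : Indep (MeasurableSpace.comap W inferInstance) m P) (hZ : Measurable[m] Z)
    (hW : Measurable W) (hs : MeasurableSet[m] s) {f : β × γ → ℝ} (hf : Measurable f) {C : ℝ}
    (hC : ∀ p, ‖f p‖ ≤ C) :
    ∫ ω in s, f (Z ω, W ω) ∂P = ∫ ω in s, ∫ w, f (Z ω, w) ∂(P.map W) ∂P := by
  have hZ' : Measurable Z := hZ.mono hm le_rfl
  have hmap := hind.map_prodMk_restrict_eq_prod hm hZ hW hs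
  calc ∫ ω in s, f (Z ω, W ω) ∂P
      = ∫ p, f p ∂((P.restrict s).map (fun ω => (Z ω, W ω))) :=
        (integral_map (hZ'.prodMk hW).aemeasurable hf.aestronglyMeasurable).symm
    _ = ∫ z, ∫ w, f (z, w) ∂(P.map W) ∂((P.restrict s).map Z) := by
        rw [hmap, integral_prod f (.of_bound hf.aestronglyMeasurable C (.of_forall hC))]
    _ = ∫ ω in s, ∫ w, f (Z ω, w) ∂(P.map W) ∂P :=
        integral_map hZ'.aemeasurable
          hf.stronglyMeasurable.integral_prod_right'.aestronglyMeasurable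

end Freezing

lemma MulAction.mem_orbit_of_forall_eq_smul {G E : Type*} [Group G] [MulAction G E]
    {x : ℤ → E} {v : ℤ → G} (h : ∀ n, x (n + 1) = v (n + 1) • x n) (n : ℤ) :
    x n ∈ orbit G (x 0) := by
  rw [← orbit_eq_iff]
  induction n using Int.induction_on with
  | zero => rfl
  | succ k ih => rw [h, orbit_smul, ih]
  | pred k ih =>
    have hk := h (-k - 1)
    rw [sub_add_cancel] at hk
    rw [← ih, hk, orbit_smul]

abbrev LawOfProdTendsto {G : Type*} [Monoid G] [TopologicalSpace G] [MeasurableSpace G]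
    (μ ν : Measure G) : Prop :=
  ∀ ψ : G →ᵇ ℝ, Tendsto (fun n : ℕ =>
    ∫ v, ψ (List.ofFn v).prod ∂(Measure.pi fun _ : Fin n => μ)) atTop (𝓝 (∫ g, ψ g ∂ν))

section Averages

variable {G E : Type*} [Group G] [MeasurableSpace G] [TopologicalSpace E] [MulAction G E]

/-- The `n`-step transition operator of the walk; the factor `v (Fin.last _)` acts first. -/
noncomputable def walkAverage (μ : Measure G) (n : ℕ) (φ : E →ᵇ ℝ) (x : E) : ℝ :=
  ∫ v, φ ((List.ofFn v).prod • x) ∂(Measure.pi fun _ : Fin n => μ)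

noncomputable def orbitAverage (ν : Measure G) (φ : E →ᵇ ℝ) (x : E) : ℝ :=
  ∫ g, φ (g • x) ∂ν

variable (μ : Measure G) (φ : E →ᵇ ℝ)

lemma orbitAverage_smul [MeasurableMul G] (ν : Measure G) [ν.IsMulRightInvariant] (g : G)
    (x : E) : orbitAverage ν φ (g • x) = orbitAverage ν φ x := by
  simp only [orbitAverage, ← mul_smul]
  exact integral_mul_right_eq_self (fun u => φ (u • x)) g

lemma orbitAverage_eq_of_mem_orbit [MeasurableMul G] (ν : Measure G) [ν.IsMulRightInvariant]
    {x y : E} (hy : y ∈ MulAction.orbit G x) : orbitAverage ν φ y = orbitAverage ν φ x := by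
  obtain ⟨g, rfl⟩ := hy
  exact orbitAverage_smul φ ν g x

variable [IsProbabilityMeasure μ]

@[simp]
lemma walkAverage_zero (x : E) : walkAverage μ 0 φ x = φ x := by
  simp [walkAverage]

lemma norm_walkAverage_le (n : ℕ) (x : E) : ‖walkAverage μ n φ x‖ ≤ ‖φ‖ :=
  φ.norm_integral_comp_le _

variable [TopologicalSpace G] [IsTopologicalGroup G] [SecondCountableTopology G] [BorelSpace G]
  [ContinuousSMul G E]

lemma walkAverage_succ (n : ℕ) (x : E) :
    walkAverage μ (n + 1) φ x = ∫ w, walkAverage μ n φ (w • x) ∂μ := by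
  let H : G × (Fin n → G) → ℝ := fun p => φ ((List.ofFn p.2).prod • p.1 • x)
  have hH : Continuous H := φ.continuous.comp
    ((continuous_list_ofFn_prod.comp continuous_snd).smul (continuous_fst.smul continuous_const))
  have hmp := measurePreserving_piFinSuccAbove (fun _ : Fin (n + 1) => μ) (Fin.last n)
  calc walkAverage μ (n + 1) φ x
      = ∫ v, H (MeasurableEquiv.piFinSuccAbove (fun _ => G) (Fin.last n) v)
          ∂(Measure.pi fun _ : Fin (n + 1) => μ) := by
        refine integral_congr_ae (Eventually.of_forall fun v => ?_)
        simp only [H, MeasurableEquiv.piFinSuccAbove_apply, Fin.insertNthEquiv_symm_apply,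
          Fin.removeNth_last, List.ofFn_succ', List.prod_concat, mul_smul]
        rfl
    _ = ∫ p, H p ∂(μ.prod (Measure.pi fun _ : Fin n => μ)) := hmp.integral_comp' _
    _ = ∫ w, walkAverage μ n φ (w • x) ∂μ :=
        integral_prod H (φ.integrable_comp hH.aestronglyMeasurable)

lemma continuous_walkAverage [FirstCountableTopology E] (n : ℕ) : Continuous (walkAverage μ n φ) :=
  φ.continuous_integral_comp_smul continuous_list_ofFn_prod

variable [CompactSpace G]

lemma equicontinuous_walkAverage_smul (x : E) :
    Equicontinuous fun n (g : G) => walkAverage μ n φ (g • x) := by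
  intro g₀
  rw [Metric.equicontinuousAt_iff_right]
  intro ε hε
  let : UniformSpace G := IsTopologicalGroup.rightUniformSpace G
  have hunif := Metric.tendstoUniformly_iff.1
    (Continuous.tendstoUniformly (fun g u : G => φ (u • g • x))
      (φ.continuous.comp (continuous_snd.smul (continuous_fst.smul continuous_const))) g₀)
    (ε / 2) (half_pos hε)
  filter_upwards [hunif] with g hg n
  have hint : ∀ y : E, Integrable (fun v : Fin n → G => φ ((List.ofFn v).prod • y))
      (Measure.pi fun _ => μ) := fun y =>
    φ.integrable_comp (φ.continuous.comp
      (continuous_list_ofFn_prod.smul continuous_const)).aestronglyMeasurable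
  exact (dist_integral_le_of_forall_dist_le (hint _) (hint _) fun v => (hg _).le).trans_lt
    (half_lt_self hε)

variable (haar : Measure G) [haar.IsMulRightInvariant]

lemma tendstoUniformly_walkAverage_smul
    (hconv : LawOfProdTendsto μ haar)
    (x : E) :
    TendstoUniformly (fun n (g : G) => walkAverage μ n φ (g • x))
      (fun _ => orbitAverage haar φ x) atTop := by
  refine (equicontinuous_walkAverage_smul μ φ x).tendstoUniformly_of_tendsto
    (tendsto_pi_nhds.2 fun g => ?_)
  rw [← orbitAverage_smul φ haar g x]
  exact hconv (φ.compContinuous ⟨fun u => u • g • x, continuous_id.smul continuous_const⟩)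

lemma tendsto_walkAverage_of_mem_orbit
    (hconv : LawOfProdTendsto μ haar)
    {x : E} {y : ℕ → E} (hy : ∀ n, y n ∈ MulAction.orbit G x) :
    Tendsto (fun n => walkAverage μ n φ (y n)) atTop (𝓝 (orbitAverage haar φ x)) := by
  choose g hg using hy
  refine Metric.tendsto_nhds.2 fun ε hε => ?_
  filter_upwards [Metric.tendstoUniformly_iff.1
    (tendstoUniformly_walkAverage_smul μ φ haar hconv x) ε hε] with n hn
  rw [← hg n, dist_comm]
  exact hn (g n)

end Averages

abbrev pastSigma {Ω G E : Type*} [MeasurableSpace G] [MeasurableSpace E] (X : ℤ → Ω → E)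
    (V : ℤ → Ω → G) (n : ℤ) : MeasurableSpace Ω :=
  ⨆ k : ℤ, ⨆ _ : k ≤ n,
    MeasurableSpace.comap (X k) inferInstance ⊔ MeasurableSpace.comap (V k) inferInstance

section RandomWalk

variable {Ω G E : Type*} [MeasurableSpace G] [MeasurableSpace E] {X : ℤ → Ω → E}
  {V : ℤ → Ω → G}

lemma measurable_pastSigma {k n : ℤ} (hkn : k ≤ n) : Measurable[pastSigma X V n] (X k) :=
  measurable_iff_comap_le.2 (le_iSup_of_le k (le_iSup_of_le hkn le_sup_left))

lemma pastSigma_le [MeasurableSpace Ω] (hX : ∀ n, Measurable (X n))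
    (hV : ∀ n, Measurable (V n)) (n : ℤ) :
    pastSigma X V n ≤ ‹MeasurableSpace Ω› :=
  iSup₂_le fun k _ => sup_le (hX k).comap_le (hV k).comap_le

structure IsRandomWalk [MeasurableSpace Ω] [Group G] [MulAction G E] (P : Measure Ω)
    (μ : Measure G) (X : ℤ → Ω → E) (V : ℤ → Ω → G) : Prop where
  measurable_X : ∀ n, Measurable (X n)
  measurable_V : ∀ n, Measurable (V n)
  map_V : ∀ n, P.map (V n) = μ
  eq_smul : ∀ n ω, X (n + 1) ω = V (n + 1) ω • X n ω
  indep : ∀ n, Indep (MeasurableSpace.comap (V (n + 1)) inferInstance) (pastSigma X V n) P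

variable [Group G] [TopologicalSpace G] [IsTopologicalGroup G] [BorelSpace G] [TopologicalSpace E]
  [FirstCountableTopology E] [BorelSpace E] [MulAction G E] [ContinuousSMul G E] (φ : E →ᵇ ℝ)

lemma stronglyMeasurable_orbitAverage_tail
    (hrec : ∀ n : ℤ, ∀ ω, X (n + 1) ω = V (n + 1) ω • X n ω) (ν : Measure G) [IsFiniteMeasure ν]
    [ν.IsMulRightInvariant] :
    StronglyMeasurable[⨅ n, pastSigma X V n] fun ω => orbitAverage ν φ (X 0 ω) := by
  have hcont : Continuous (orbitAverage ν φ) := φ.continuous_integral_comp_smul continuous_id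
  refine Measurable.stronglyMeasurable (measurable_iff_comap_le.2 (le_iInf fun n => ?_))
  have hn : (fun ω => orbitAverage ν φ (X 0 ω)) = fun ω => orbitAverage ν φ (X n ω) :=
    funext fun ω =>
      (orbitAverage_eq_of_mem_orbit φ ν (MulAction.mem_orbit_of_forall_eq_smul
        (x := (X · ω)) (v := (V · ω)) (hrec · ω) n)).symm
  rw [hn]
  exact (hcont.measurable.comp (measurable_pastSigma le_rfl)).comap_le

variable [MeasurableSpace Ω] [SecondCountableTopology G] {P : Measure Ω} [IsProbabilityMeasure P]
  (μ : Measure G) [IsProbabilityMeasure μ]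

lemma setIntegral_walkAverage_step (hw : IsRandomWalk P μ X V) (m : ℤ) (n : ℕ) {s : Set Ω}
    (hs : MeasurableSet[pastSigma X V m] s) :
    ∫ ω in s, walkAverage μ n φ (X (m + 1) ω) ∂P
      = ∫ ω in s, walkAverage μ (n + 1) φ (X m ω) ∂P := by
  have hf : Continuous fun p : E × G => walkAverage μ n φ (p.2 • p.1) :=
    (continuous_walkAverage μ φ n).comp (continuous_snd.smul continuous_fst)
  have h := (hw.indep m).setIntegral_comp_prodMk (pastSigma_le hw.measurable_X hw.measurable_V m)
    (measurable_pastSigma le_rfl) (hw.measurable_V _) hs hf.measurable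
    fun p => norm_walkAverage_le μ φ n _
  rw [hw.map_V] at h
  simpa only [hw.eq_smul, walkAverage_succ] using h

lemma setIntegral_eq_walkAverage (hw : IsRandomWalk P μ X V) {s : Set Ω}
    (hs : MeasurableSet[⨅ m, pastSigma X V m] s) (n : ℕ) :
    ∫ ω in s, φ (X 0 ω) ∂P = ∫ ω in s, walkAverage μ n φ (X (-n) ω) ∂P := by
  induction n with
  | zero => simp
  | succ n ih =>
    have hidx : (-(n + 1 : ℕ) : ℤ) + 1 = -n := by push_cast; ring
    rw [ih, ← hidx]
    exact setIntegral_walkAverage_step φ μ hw _ n (MeasurableSpace.measurableSet_iInf.1 hs _)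

lemma setIntegral_orbitAverage_tail [CompactSpace G] (haar : Measure G)
    [haar.IsMulRightInvariant] (hconv : LawOfProdTendsto μ haar) (hw : IsRandomWalk P μ X V)
    {s : Set Ω} (hs : MeasurableSet[⨅ m, pastSigma X V m] s) :
    ∫ ω in s, orbitAverage haar φ (X 0 ω) ∂P = ∫ ω in s, φ (X 0 ω) ∂P := by
  have hlim : Tendsto (fun n : ℕ => ∫ ω in s, walkAverage μ n φ (X (-n) ω) ∂P) atTop
      (𝓝 (∫ ω in s, orbitAverage haar φ (X 0 ω) ∂P)) :=
    tendsto_integral_of_dominated_convergence (fun _ => ‖φ‖)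
      (fun n => ((continuous_walkAverage μ φ n).measurable.comp
        (hw.measurable_X _)).aestronglyMeasurable)
      (integrable_const _) (fun n => .of_forall fun ω => norm_walkAverage_le μ φ n _)
      (.of_forall fun ω => tendsto_walkAverage_of_mem_orbit μ φ haar hconv
        fun n => MulAction.mem_orbit_of_forall_eq_smul
          (x := (X · ω)) (v := (V · ω)) (hw.eq_smul · ω) _)
  refine tendsto_nhds_unique hlim ?_
  simp_rw [← setIntegral_eq_walkAverage φ μ hw hs]
  exact tendsto_const_nhds

end RandomWalk

/-- for the random walk `X_{n+1} = V_{n+1} • X_n` on a Polish space `E`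
under a continuous action of a compact group `G`, with i.i.d. innovations of law `μ`
whose convolution powers converge weakly to the Haar probability measure (equivalently,
whose support is contained in no coset of a proper closed normal subgroup), the
conditional law of `X₀` given the asymptotic σ-field `𝓕_{-∞}` is the uniform law on the
orbit `G ⬝ X₀`, i.e. the image of Haar measure under `g ↦ g • X₀`: for every bounded
continuous `φ`, `E[φ(X₀) | 𝓕_{-∞}] = ∫_G φ(g • X₀) dg` a.s. -/
theorem stmt_16 {G : Type*} [Group G] [TopologicalSpace G] [IsTopologicalGroup G]
    [CompactSpace G] [SecondCountableTopology G] [MeasurableSpace G] [BorelSpace G]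
    {E : Type*} [TopologicalSpace E] [PolishSpace E] [MeasurableSpace E] [BorelSpace E]
    [MulAction G E] [ContinuousSMul G E]
    (haar : Measure G) [haar.IsHaarMeasure] [IsProbabilityMeasure haar]
    {Ω : Type*} [MeasurableSpace Ω] (P : Measure Ω) [IsProbabilityMeasure P]
    (X : ℤ → Ω → E) (V : ℤ → Ω → G)
    (hX : ∀ n, Measurable (X n)) (hV : ∀ n, Measurable (V n))
    (μ : Measure G) [IsProbabilityMeasure μ]
    (hlaw : ∀ n : ℤ, Measure.map (V n) P = μ)
    (hconv : ∀ φ : G →ᵇ ℝ,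
      Tendsto (fun n : ℕ =>
          ∫ v, φ (List.ofFn v).prod ∂(Measure.pi fun _ : Fin n => μ))
        atTop (𝓝 (∫ g, φ g ∂haar)))
    (hrec : ∀ n : ℤ, ∀ ω, X (n + 1) ω = V (n + 1) ω • X n ω)
    (hindep : ∀ n : ℤ,
      Indep (MeasurableSpace.comap (V (n + 1)) inferInstance)
        (⨆ k : ℤ, ⨆ _ : k ≤ n,
          MeasurableSpace.comap (X k) inferInstance ⊔
            MeasurableSpace.comap (V k) inferInstance) P) :
    ∀ φ : E →ᵇ ℝ,
      P[(fun ω => φ (X 0 ω)) |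
          ⨅ n : ℤ, ⨆ k : ℤ, ⨆ _ : k ≤ n,
            MeasurableSpace.comap (X k) inferInstance ⊔
              MeasurableSpace.comap (V k) inferInstance]
        =ᵐ[P] fun ω => ∫ g, φ (g • X 0 ω) ∂haar := by
  intro φ
  have := haar.isMulRightInvariant_of_isProbabilityMeasure
  have hw : IsRandomWalk P μ X V := ⟨hX, hV, hlaw, hrec, hindep⟩
  have htail : (⨅ n, pastSigma X V n) ≤ ‹MeasurableSpace Ω› :=
    (iInf_le _ 0).trans (pastSigma_le hX hV 0)
  have hmeas := stronglyMeasurable_orbitAverage_tail φ hrec haar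
  refine (ae_eq_condExp_of_forall_setIntegral_eq htail
    (φ.integrable_comp ((φ.continuous.measurable.comp (hX 0)).aestronglyMeasurable))
    (fun s _ _ => (Integrable.of_bound (hmeas.mono htail).aestronglyMeasurable ‖φ‖
      (.of_forall fun _ => φ.norm_integral_comp_le _)).integrableOn)
    (fun s hs _ => setIntegral_orbitAverage_tail φ μ haar hconv hw hs)
    hmeas.aestronglyMeasurable).symm
end
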